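/- Let T be the bilateral shift on L²(𝕋) and let R(z) be the 4×4 operator matrix [[z0, z1T+z2, z3, 0],[z1T*+z2, z0, 0, z3],[z3, 0, z0, z1T+z2],[0, z3, z1T*+z2, z0]] acting on (L²(𝕋))⁴. Then R(z) is invertible if and only if for every real x with −1 ≤ x ≤ 1, both (z0 − z3)² − z1² − z2² − 2z1z2x ≠ 0 and (z0 + z3)² − z1² − z2² − 2z1z2x ≠ 0. -/

import Mathlib

/-
Conjugating by `(x, y) ↦ (x + y, x - y)` splits the operator into the two blocks
`[[a, B], [B⋆, a]]` with `a = z0 ± z3` and `B = z1 T + z2`. As `T` is unitary, `B` and `B⋆`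
commute and `a² - B B⋆ = (a² - z1² - z2²) - z1 z2 (T + T⋆)`; the selfadjoint `T + T⋆` has
spectrum in `[-2, 2]`, so under the hypothesis the adjugate inverts the block.
Conversely, every `μ` on the unit circle is an approximate eigenvalue of the bilateral shift
(truncated geometric sequences), with the same approximate eigenvectors for `T⋆` and `μ̄`. If
`x = Re μ` is a zero, the scalar symbol `[[a, z1 μ + z2], [z1 μ̄ + z2, a]]` is singular, and a
kernel vector of it, spread along the approximate eigenvectors, gives unit vectors which the
block sends to `0`: the block is not bounded below.
-/

open ContinuousLinearMap

/-- `ℓ²(ℤ)`, a concrete model of `L²(𝕋)` in which the bilateral shift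
(multiplication by `e^{iθ}`) acts by shifting coordinates. -/
noncomputable abbrev HT : Type := lp (fun _ : ℤ => ℂ) 2

/-- The 2×2 operator block matrix `[[A, B],[C, D]]` acting on `H ⊕ H`. -/
noncomputable def blockCLM {H : Type*} [NormedAddCommGroup H] [NormedSpace ℂ H]
    (A B C D : H →L[ℂ] H) : H × H →L[ℂ] H × H :=
  (A.coprod B).prod (C.coprod D)

open Filter Topology ComplexConjugate

section lpComp

variable {𝕜 : Type*} [NormedField 𝕜] {E : Type*} [NormedAddCommGroup E] [NormedSpace 𝕜 E]
  {α β : Type*} {p : ENNReal} [Fact (1 ≤ p)]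

noncomputable def lpComp (hp : 0 < p.toReal) (e : α ≃ β) :
    lp (fun _ : β => E) p →ₗᵢ[𝕜] lp (fun _ : α => E) p where
  toFun f := ⟨f ∘ e, (memℓp_gen_iff hp).2 <| e.summable_iff.2 <| (memℓp_gen_iff hp).1 f.2⟩
  map_add' _ _ := rfl
  map_smul' _ _ := rfl
  norm_map' f := by
    rw [lp.norm_eq_tsum_rpow hp, lp.norm_eq_tsum_rpow hp]
    exact congrArg (· ^ (1 / p.toReal)) (e.tsum_eq fun b => ‖f b‖ ^ p.toReal)

noncomputable def lpCompEquiv (hp : 0 < p.toReal) (e : α ≃ β) :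
    lp (fun _ : β => E) p ≃ₗᵢ[𝕜] lp (fun _ : α => E) p :=
  { lpComp hp e with
    invFun := lpComp (𝕜 := 𝕜) hp e.symm
    left_inv := fun f => lp.ext <| funext fun b => congrArg f (e.apply_symm_apply b)
    right_inv := fun f => lp.ext <| funext fun a => congrArg f (e.symm_apply_apply a) }

end lpComp

section ApproxEigen

variable {E : Type*} [NormedAddCommGroup E] [NormedSpace ℂ E]

def IsApproxEigenseq (L : E →L[ℂ] E) (μ : ℂ) (v : ℕ → E) : Prop :=
  (∀ n, ‖v n‖ = 1) ∧ Tendsto (fun n => L (v n) - μ • v n) atTop (𝓝 0)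

theorem not_isUnit_of_tendsto_apply_zero (L : E →L[ℂ] E) {v : ℕ → E} {c : ℝ} (hc : 0 < c)
    (hv : ∀ n, c ≤ ‖v n‖) (hL : Tendsto (fun n => L (v n)) atTop (𝓝 0)) : ¬IsUnit L := by
  rintro ⟨u, rfl⟩
  have hv0 : Tendsto v atTop (𝓝 0) := by
    have := ((↑u⁻¹ : E →L[ℂ] E).continuous.tendsto 0).comp hL
    simpa only [Function.comp_def, map_zero, ← mul_apply_eq_comp, Units.inv_mul,
      one_apply_eq_self] using this
  have := ge_of_tendsto hv0.norm (Eventually.of_forall hv)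
  rw [norm_zero] at this
  exact hc.not_ge this

theorem IsApproxEigenseq.affine {L : E →L[ℂ] E} {μ : ℂ} {v : ℕ → E}
    (h : IsApproxEigenseq L μ v) (z w : ℂ) :
    IsApproxEigenseq (z • L + w • 1) (z * μ + w) v := by
  refine ⟨h.1, ?_⟩
  have := h.2.const_smul z
  rw [smul_zero] at this
  refine this.congr fun n => ?_
  simp only [add_apply, smul_apply, one_apply_eq_self, smul_sub, add_smul, mul_smul]
  abel

end ApproxEigen

theorem IsApproxEigenseq.adjoint_of_mem_unitary {H : Type*} [NormedAddCommGroup H]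
    [InnerProductSpace ℂ H] [CompleteSpace H] {U : H →L[ℂ] H} (hU : U ∈ unitary (H →L[ℂ] H))
    {μ : ℂ} (hμ : ‖μ‖ = 1) {v : ℕ → H} (h : IsApproxEigenseq U μ v) :
    IsApproxEigenseq (adjoint U) (conj μ) v := by
  refine ⟨h.1, ?_⟩
  have hUU : adjoint U * U = 1 := by rw [← star_eq_adjoint]; exact Unitary.star_mul_self_of_mem hU
  have hnorm : ∀ x, ‖adjoint U x - conj μ • x‖ = ‖U x - μ • x‖ := by
    intro x
    have hμμ : conj μ * μ = 1 := by
      rw [Complex.conj_mul', hμ]; norm_num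
    have : adjoint U x - conj μ • x = -conj μ • adjoint U (U x - μ • x) := by
      rw [map_sub, map_smul, ← mul_apply_eq_comp, hUU, one_apply_eq_self, smul_sub, smul_smul,
        neg_mul, hμμ]
      module
    rw [this, norm_smul, norm_neg, Complex.norm_conj, hμ, one_mul,
      norm_map_of_mem_unitary (by rw [← star_eq_adjoint]; exact Unitary.star_mem hU)]
  have := h.2
  rw [tendsto_zero_iff_norm_tendsto_zero] at this ⊢
  simpa only [hnorm] using this

section Shift

variable {T : HT →L[ℂ] HT} (hT : ∀ (f : HT) (n : ℤ), T f n = f (n - 1))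
include hT

theorem mem_unitary_of_shift : T ∈ unitary (HT →L[ℂ] HT) := by
  have hp : 0 < (2 : ENNReal).toReal := by norm_num
  let e : HT ≃ₗᵢ[ℂ] HT := lpCompEquiv hp (Equiv.subRight 1)
  have : T = (e : HT →L[ℂ] HT) := by
    ext f n
    exact (hT f n).trans rfl
  exact this ▸ (Unitary.linearIsometryEquiv.symm e).prop

theorem shift_single (i : ℤ) (c : ℂ) : T (lp.single 2 i c) = lp.single 2 (i + 1) c := by
  ext n
  simp only [hT, lp.single_apply, Pi.single_apply, sub_eq_iff_eq_add]

theorem exists_isApproxEigenseq_shift {μ : ℂ} (hμ : ‖μ‖ = 1) : ∃ v, IsApproxEigenseq T μ v := by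
  have hμ0 : μ ≠ 0 := norm_ne_zero_iff.1 (hμ ▸ one_ne_zero)
  -- `u N` is the truncation to `[0, N)` of the formal eigenvector `(μ ^ (-i))ᵢ`
  let g : ℤ → HT := fun i => lp.single 2 i (μ ^ (-i))
  let u : ℕ → HT := fun N => ∑ n ∈ Finset.range N, g n
  have hTg : ∀ i, T (g i) = μ • g (i + 1) := fun i => by
    rw [shift_single hT, ← lp.single_smul, smul_eq_mul, ← zpow_one_add₀ hμ0]
    ring_nf
  have hu_norm : ∀ N, ‖u N‖ = √N := fun N => by
    have := lp.norm_sum_single (E := fun _ : ℤ => ℂ) (by norm_num : 0 < (2 : ENNReal).toReal)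
      (fun i => μ ^ (-i)) ((Finset.range N).map Nat.castEmbedding)
    simp only [Finset.sum_map, Nat.castEmbedding_apply, norm_zpow, hμ, one_zpow,
      Real.one_rpow, Finset.sum_const, Finset.card_map, Finset.card_range, nsmul_eq_mul,
      mul_one] at this
    rw [← Real.sqrt_sq (norm_nonneg _), ← Real.rpow_two]
    exact congrArg Real.sqrt (by exact_mod_cast this)
  have hu_defect : ∀ N, ‖T (u N) - μ • u N‖ ≤ 2 := fun N => by
    have : T (u N) - μ • u N = μ • (g N - g 0) := by
      simp only [u, map_sum, hTg, Finset.smul_sum, ← Finset.sum_sub_distrib, ← smul_sub]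
      have := Finset.sum_range_sub (fun n : ℕ => g n) N
      push_cast at this
      rw [← Finset.smul_sum, this]
    rw [this, norm_smul, hμ, one_mul]
    refine (norm_sub_le _ _).trans ?_
    norm_num [g, hμ]
  refine ⟨fun N => (‖u (N + 1)‖⁻¹ : ℂ) • u (N + 1), fun N => ?_, ?_⟩
  · have : ‖u (N + 1)‖ ≠ 0 := by rw [hu_norm]; positivity
    rw [norm_smul, norm_inv, Complex.norm_real, norm_norm, inv_mul_cancel₀ this]
  · have hlim : Tendsto (fun N : ℕ => (√(N + 1 : ℕ))⁻¹ * 2) atTop (𝓝 0) := by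
      simpa using ((tendsto_inv_atTop_zero.comp <| Real.tendsto_sqrt_atTop.comp <|
        tendsto_natCast_atTop_atTop.comp (tendsto_add_atTop_nat 1)).mul_const (2 : ℝ))
    refine squeeze_zero_norm (fun N => ?_) hlim
    rw [map_smul, smul_comm μ, ← smul_sub, norm_smul, norm_inv, Complex.norm_real, norm_norm,
      hu_norm]
    exact mul_le_mul_of_nonneg_left (hu_defect _) (by positivity)

end Shift

theorem isUnit_smul_one_sub_smul_add_star {A : Type*} [CStarAlgebra A] {u : A}
    (hu : u ∈ unitary A) {c d : ℂ} (h : ∀ x : ℝ, -1 ≤ x → x ≤ 1 → c - 2 * d * x ≠ 0) :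
    IsUnit (c • (1 : A) - d • (u + star u)) := by
  nontriviality A
  by_cases hd : d = 0
  · have hc : c ≠ 0 := by simpa using h 0 (by norm_num) (by norm_num)
    rw [hd, zero_smul, sub_zero, ← Algebra.algebraMap_eq_smul_one]
    exact (Ne.isUnit hc).map (algebraMap ℂ A)
  -- the spectrum of the selfadjoint `S` is real and bounded by `‖S‖ ≤ 2`
  set S := u + star u
  have hS : IsSelfAdjoint S := by simp [S, IsSelfAdjoint, add_comm]
  have hnorm : ‖S‖ ≤ 2 := by
    refine (norm_add_le _ _).trans ?_
    rw [norm_star, CStarRing.norm_of_mem_unitary hu]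
    norm_num
  have : c • (1 : A) - d • S = Units.mk0 d hd • (algebraMap ℂ A (c / d) - S) := by
    rw [Units.smul_mk0, smul_sub, Algebra.algebraMap_eq_smul_one, smul_smul, mul_div_cancel₀ _ hd]
  rw [this, isUnit_smul_iff, ← spectrum.notMem_iff]
  intro hmem
  have hre := hS.mem_spectrum_eq_re hmem
  have hle : |(c / d).re| ≤ 2 :=
    (Complex.abs_re_le_norm _).trans ((spectrum.norm_le_norm_of_mem hmem).trans hnorm)
  refine h ((c / d).re / 2) (by linarith [abs_le.1 hle]) (by linarith [abs_le.1 hle]) ?_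
  push_cast
  rw [← hre]
  field_simp
  ring

section Block

variable {H : Type*} [NormedAddCommGroup H] [NormedSpace ℂ H]

theorem blockCLM_apply (A B C D : H →L[ℂ] H) (x : H × H) :
    blockCLM A B C D x = (A x.1 + B x.2, C x.1 + D x.2) := rfl

theorem blockCLM_mul (A B C D A' B' C' D' : H →L[ℂ] H) :
    blockCLM A B C D * blockCLM A' B' C' D' =
      blockCLM (A * A' + B * C') (A * B' + B * D') (C * A' + D * C') (C * B' + D * D') := by
  refine ContinuousLinearMap.ext fun x => Prod.ext ?_ ?_ <;>
    simp only [mul_apply_eq_comp, blockCLM_apply, add_apply, map_add] <;> abel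

theorem blockCLM_add_smul_one (A B C D : H →L[ℂ] H) (c : ℂ) :
    blockCLM A B C D + c • 1 = blockCLM (A + c • 1) B C (D + c • 1) := by
  refine ContinuousLinearMap.ext fun x => Prod.ext ?_ ?_ <;>
    simp only [blockCLM_apply, add_apply, smul_apply, one_apply_eq_self, Prod.fst_add,
    Prod.snd_add, Prod.smul_fst, Prod.smul_snd] <;> abel

theorem blockCLM_sub_smul_one (A B C D : H →L[ℂ] H) (c : ℂ) :
    blockCLM A B C D - c • 1 = blockCLM (A - c • 1) B C (D - c • 1) := by
  refine ContinuousLinearMap.ext fun x => Prod.ext ?_ ?_ <;>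
    simp only [blockCLM_apply, sub_apply, smul_apply, one_apply_eq_self, Prod.fst_sub,
    Prod.snd_sub, Prod.smul_fst, Prod.smul_snd] <;> abel

theorem not_isUnit_blockCLM_of_isApproxEigenseq {a b c : ℂ} (habc : a ^ 2 = b * c)
    {B C : H →L[ℂ] H} {v : ℕ → H}
    (hB : IsApproxEigenseq B b v) (hC : IsApproxEigenseq C c v) :
    ¬IsUnit (blockCLM (a • 1) B C (a • 1)) := by
  obtain ⟨p, q, hpq, h1, h2⟩ :
      ∃ p q : ℂ, (p, q) ≠ 0 ∧ a * p + b * q = 0 ∧ c * p + a * q = 0 := by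
    by_cases hab : a = 0 ∧ b = 0
    · exact ⟨0, 1, by simp, by simp [hab.1, hab.2], by simp [hab.1]⟩
    · refine ⟨b, -a, fun h => hab ?_, by ring, by linear_combination -habc⟩
      simp only [Prod.mk_eq_zero, neg_eq_zero] at h
      exact h.symm
  refine not_isUnit_of_tendsto_apply_zero _ (v := fun n => (p • v n, q • v n))
    (norm_pos_iff.2 hpq) (fun n => ?_) ?_
  · simp [Prod.norm_def, norm_smul, hB.1 n]
  · have hlim := (hB.2.const_smul q).prodMk_nhds (hC.2.const_smul p)
    rw [smul_zero, smul_zero, ← Prod.zero_eq_mk] at hlim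
    refine hlim.congr fun n => ?_
    simp only [blockCLM_apply, smul_apply, one_apply_eq_self, map_smul, smul_sub, Prod.mk.injEq]
    constructor
    · linear_combination (norm := module) -h1 • v n
    · linear_combination (norm := module) -h2 • v n

variable [CompleteSpace H]

theorem isUnit_blockCLM_diag_iff (A D : H →L[ℂ] H) :
    IsUnit (blockCLM A 0 0 D) ↔ IsUnit A ∧ IsUnit D := by
  have : ⇑(blockCLM A 0 0 D) = Prod.map A D := by
    ext x <;> simp [blockCLM_apply]
  simp only [isUnit_iff_bijective, this, Prod.map_bijective]

theorem isUnit_blockCLM_symm_iff (A B : H →L[ℂ] H) :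
    IsUnit (blockCLM A B B A) ↔ IsUnit (A + B) ∧ IsUnit (A - B) := by
  set P : H × H →L[ℂ] H × H := blockCLM 1 1 1 (-1)
  have hPP : P * P = (2 : ℂ) • 1 := by
    refine ContinuousLinearMap.ext fun x => Prod.ext ?_ ?_ <;>
      simp only [P, mul_apply_eq_comp, blockCLM_apply, one_apply_eq_self, neg_apply, smul_apply,
        Prod.smul_fst, Prod.smul_snd] <;> module
  have hP : IsUnit P := isUnit_iff_exists.2 ⟨(2⁻¹ : ℂ) • P, by
    simp only [mul_smul_comm, smul_mul_assoc, hPP, smul_smul]; norm_num⟩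
  have hconj : blockCLM A B B A * P = P * blockCLM (A + B) 0 0 (A - B) := by
    refine ContinuousLinearMap.ext fun x => Prod.ext ?_ ?_ <;>
      simp only [P, mul_apply_eq_comp, blockCLM_apply, one_apply_eq_self, neg_apply, add_apply,
        sub_apply, zero_apply, map_add, map_sub, map_neg] <;> abel
  rw [← hP.mul_right_iff, hconj, hP.mul_left_iff, isUnit_blockCLM_diag_iff]

theorem isUnit_blockCLM_smul_one_of_isUnit (a : ℂ) (B C : H →L[ℂ] H) (hBC : B * C = C * B)
    (h : IsUnit (a ^ 2 • (1 : H →L[ℂ] H) - B * C)) :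
    IsUnit (blockCLM (a • 1) B C (a • 1)) := by
  set δ := a ^ 2 • (1 : H →L[ℂ] H) - B * C
  set adj := blockCLM (a • 1) (-B) (-C) (a • 1)
  have hleft : blockCLM (a • 1) B C (a • 1) * adj = blockCLM δ 0 0 δ := by
    simp only [adj, δ, blockCLM_mul, hBC, smul_mul_assoc, mul_smul_comm, one_mul, mul_one,
      mul_neg, sq]
    congr 1 <;> module
  have hright : adj * blockCLM (a • 1) B C (a • 1) = blockCLM δ 0 0 δ := by
    simp only [adj, δ, blockCLM_mul, hBC, smul_mul_assoc, mul_smul_comm, one_mul, mul_one,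
      neg_mul, sq]
    congr 1 <;> module
  have hδ : IsUnit (blockCLM δ 0 0 δ) := (isUnit_blockCLM_diag_iff δ δ).2 ⟨h, h⟩
  rw [← hleft] at hδ
  exact ((Commute.isUnit_mul_iff (hleft.trans hright.symm)).1 hδ).1

end Block

theorem isUnit_blockCLM_unitary_iff {H : Type*} [NormedAddCommGroup H] [InnerProductSpace ℂ H]
    [CompleteSpace H] {U : H →L[ℂ] H} (hU : U ∈ unitary (H →L[ℂ] H))
    (happrox : ∀ μ : ℂ, ‖μ‖ = 1 → ∃ v, IsApproxEigenseq U μ v) (a z1 z2 : ℂ) :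
    IsUnit (blockCLM (a • 1) (z1 • U + z2 • 1) (z1 • adjoint U + z2 • 1) (a • 1)) ↔
      ∀ x : ℝ, -1 ≤ x → x ≤ 1 → a ^ 2 - z1 ^ 2 - z2 ^ 2 - 2 * z1 * z2 * (x : ℂ) ≠ 0 := by
  constructor
  · intro hunit x hx1 hx2 hzero
    set μ : ℂ := ⟨x, √(1 - x ^ 2)⟩
    have hsq : √(1 - x ^ 2) ^ 2 = 1 - x ^ 2 := Real.sq_sqrt (by nlinarith)
    have hμ : ‖μ‖ = 1 := by
      rw [Complex.norm_def, Complex.normSq_mk, ← sq, ← sq, hsq]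
      simp
    have hμμ : μ * conj μ = 1 := by
      rw [Complex.mul_conj, Complex.normSq_eq_norm_sq, hμ]
      simp
    have hμre : μ + conj μ = 2 * x := by
      rw [Complex.add_conj]
      simp [μ]
    obtain ⟨v, hv⟩ := happrox μ hμ
    refine not_isUnit_blockCLM_of_isApproxEigenseq (b := z1 * μ + z2) (c := z1 * conj μ + z2)
      ?_ (hv.affine z1 z2) ((hv.adjoint_of_mem_unitary hU hμ).affine z1 z2) hunit
    linear_combination hzero - z1 ^ 2 * hμμ - z1 * z2 * hμre
  · intro h
    have hUU : U * adjoint U = 1 := by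
      rw [← star_eq_adjoint]; exact Unitary.mul_star_self_of_mem hU
    have hUU' : adjoint U * U = 1 := by
      rw [← star_eq_adjoint]; exact Unitary.star_mul_self_of_mem hU
    have hprod : ∀ X Y : H →L[ℂ] H, X * Y = 1 →
        (z1 • X + z2 • 1) * (z1 • Y + z2 • 1) = (z1 ^ 2 + z2 ^ 2) • 1 + (z1 * z2) • (X + Y) := by
      intro X Y hXY
      simp only [add_mul, mul_add, smul_mul_smul_comm, hXY, mul_one, one_mul]
      module
    refine isUnit_blockCLM_smul_one_of_isUnit a _ _
      ((hprod _ _ hUU).trans (by rw [hprod _ _ hUU', add_comm (adjoint U)])) ?_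
    rw [hprod _ _ hUU, ← star_eq_adjoint]
    convert isUnit_smul_one_sub_smul_add_star hU (c := a ^ 2 - z1 ^ 2 - z2 ^ 2) (d := z1 * z2)
      fun x hx1 hx2 => by simpa [mul_assoc, mul_left_comm] using h x hx1 hx2 using 1
    module

/-- The 4×4 operator matrix
`[[z0, z1T+z2, z3, 0],[z1T*+z2, z0, 0, z3],[z3, 0, z0, z1T+z2],[0, z3, z1T*+z2, z0]]`
on `(L²)⁴`, written as the 2×2 block matrix `[[R(z̃), z3 I],[z3 I, R(z̃)]]` where
`R(z̃) = [[z0, z1T+z2],[z1T*+z2, z0]]`, is invertible iff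
`(z0 ± z3)² − z1² − z2² − 2 z1 z2 x ≠ 0` for every `x ∈ [−1, 1]`. -/
theorem stmt_1 (T : HT →L[ℂ] HT) (hT : ∀ (f : HT) (n : ℤ), T f n = f (n - 1))
    (z0 z1 z2 z3 : ℂ) :
    IsUnit
      (blockCLM
        (blockCLM (z0 • (1 : HT →L[ℂ] HT)) (z1 • T + z2 • 1)
          (z1 • (adjoint T) + z2 • 1) (z0 • 1))
        (z3 • (1 : HT × HT →L[ℂ] HT × HT)) (z3 • 1)
        (blockCLM (z0 • (1 : HT →L[ℂ] HT)) (z1 • T + z2 • 1)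
          (z1 • (adjoint T) + z2 • 1) (z0 • 1))) ↔
      ∀ x : ℝ, -1 ≤ x → x ≤ 1 →
        (z0 - z3) ^ 2 - z1 ^ 2 - z2 ^ 2 - 2 * z1 * z2 * (x : ℂ) ≠ 0 ∧
        (z0 + z3) ^ 2 - z1 ^ 2 - z2 ^ 2 - 2 * z1 * z2 * (x : ℂ) ≠ 0 := by
  have hblock := isUnit_blockCLM_unitary_iff (mem_unitary_of_shift hT)
    (fun _ hμ => exists_isApproxEigenseq_shift hT hμ)
  rw [isUnit_blockCLM_symm_iff, blockCLM_add_smul_one, blockCLM_sub_smul_one, ← add_smul,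
    ← sub_smul, hblock, hblock]
  exact ⟨fun h x hx1 hx2 => ⟨h.2 x hx1 hx2, h.1 x hx1 hx2⟩,
    fun h => ⟨fun x hx1 hx2 => (h x hx1 hx2).2, fun x hx1 hx2 => (h x hx1 hx2).1⟩⟩
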